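/- Let q ≥ 1 and let a_1, ..., a_n be residues mod q, each coprime to q. Then the number of subsets I ⊆ [n] with ∑_{i∈I} a_i ≡ 0 (mod q) is at most C(n, ⌊n/2⌋)_q, the middle mod-q binomial coefficient. -/

import Mathlib

/-!
Generalize from the target `{0}` to any set `T` of residues, and from the middle coefficient to
the sum `W_n(k)` of the `k` middle mod-`q` binomial coefficients of row `n`: the number `N_n(T)` of
`I` with `∑_{i ∈ I} a_i ∈ T` is at most `W_n(|T|)`.

Induct on `n`. With `T' = T - a_n`, splitting on whether `n ∈ I` gives
`N_n(T) = N_{n-1}(T) + N_{n-1}(T') = N_{n-1}(T ∪ T') + N_{n-1}(T ∩ T')`, where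
`|T ∪ T'| + |T ∩ T'| = 2|T|` and `|T ∩ T'| < |T|` unless `T` is invariant under translation by
the unit `a_n`, i.e. `T = ℤ/q`, a case settled by `W_n(q) = 2 W_{n-1}(q)`. Since `C(n, ·)_q`
decreases away from `n / 2` over half a period, `k ↦ W_n(k)` is concave for `k ≤ q`, so
`W_{n-1}(|T ∪ T'|) + W_{n-1}(|T ∩ T'|) ≤ W_{n-1}(k + 1) + W_{n-1}(k - 1) = W_n(k)`
for `k = |T|`, by Pascal's rule.
-/

/-- The mod-q binomial coefficient `C(n,s)_q = ∑_{0 ≤ j ≤ n, j ≡ s (mod q)} C(n,j)`. -/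
def modBinom (n q : ℕ) (s : ℤ) : ℕ :=
  ∑ j ∈ Finset.range (n + 1), if ((j : ℤ) - s) % (q : ℤ) = 0 then n.choose j else 0

/-- The sum of the `k` middle mod-`q` binomial coefficients,
`_{(n-k)/2 ≤ j < (n+k)/2} C(n,j)_q` (the integers `j` in question all lie in `[-q, n+q]`
when `k ≤ q`). -/
noncomputable def middleSum (n q k : ℕ) : ℕ :=
  ∑ j ∈ Finset.Icc (-(q : ℤ)) ((n : ℤ) + q),
    if (n : ℤ) - k ≤ 2 * j ∧ 2 * j < (n : ℤ) + k then modBinom n q j else 0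

open Finset

section ModBinom

variable {n q : ℕ}

lemma modBinom_eq_sum_range {m : ℕ} (hm : n < m) (s : ℤ) :
    modBinom n q s = ∑ j ∈ range m, if s ≡ j [ZMOD q] then n.choose j else 0 := by
  simp only [modBinom, ← Int.dvd_iff_emod_eq_zero, ← Int.modEq_iff_dvd]
  refine sum_subset (range_subset_range.mpr hm) fun j _ hj => ?_
  simp [Nat.choose_eq_zero_of_lt (by simpa using hj : n < j)]

lemma modBinom_congr {s s' : ℤ} (h : s ≡ s' [ZMOD q]) : modBinom n q s = modBinom n q s' := by
  simp only [modBinom_eq_sum_range n.lt_succ_self]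
  refine sum_congr rfl fun j _ => ?_
  have : s ≡ j [ZMOD q] ↔ s' ≡ j [ZMOD q] := ⟨h.symm.trans, h.trans⟩
  simp only [this]

lemma modBinom_sub (s : ℤ) : modBinom n q (n - s) = modBinom n q s := by
  simp only [modBinom_eq_sum_range n.lt_succ_self]
  rw [← sum_range_reflect]
  refine sum_congr rfl fun j hj => ?_
  have hj : j ≤ n := Nat.lt_succ_iff.mp (mem_range.mp hj)
  have : (n : ℤ) - s ≡ (n - j : ℕ) [ZMOD q] ↔ s ≡ j [ZMOD q] := by
    rw [Int.modEq_iff_dvd, Int.modEq_iff_dvd, Nat.cast_sub hj, sub_sub_sub_cancel_left, dvd_sub_comm]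
  simp only [Nat.succ_sub_one, this, Nat.choose_symm hj]

lemma modBinom_succ (s : ℤ) : modBinom (n + 1) q s = modBinom n q s + modBinom n q (s - 1) := by
  rw [modBinom_eq_sum_range (Nat.lt_succ_self (n + 1)), modBinom_eq_sum_range (by omega : n < n + 2),
    modBinom_eq_sum_range n.lt_succ_self, sum_range_succ' _ (n + 1), sum_range_succ' _ (n + 1)]
  have hshift (j : ℕ) : s - 1 ≡ j [ZMOD q] ↔ s ≡ (j + 1 : ℕ) [ZMOD q] := by
    rw [Int.modEq_iff_dvd, Int.modEq_iff_dvd, Nat.cast_succ, sub_sub_eq_add_sub]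
  simp only [Nat.choose_succ_succ', ite_add_zero, sum_add_distrib, hshift, Nat.choose_zero_right,
    Nat.succ_eq_add_one]
  ring

lemma modBinom_zero_eq_zero {s : ℤ} (h0 : 0 < s) (hq : s < q) : modBinom 0 q s = 0 := by
  have : ¬ s ≡ 0 [ZMOD q] := fun h => by
    have := Int.le_of_dvd h0 (Int.modEq_zero_iff_dvd.mp h)
    omega
  simp [modBinom_eq_sum_range zero_lt_one, this]

/-- `C(n, ·)_q` is symmetric about `n / 2` and, being `q`-periodic, about `(n + q) / 2`;
in between it decreases. -/
lemma modBinom_add_one_le (s : ℤ) (h₁ : n ≤ 2 * s) (h₂ : 2 * s + 2 ≤ n + q) :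
    modBinom n q (s + 1) ≤ modBinom n q s := by
  induction n generalizing s with
  | zero => rw [modBinom_zero_eq_zero (by omega) (by omega)]; exact Nat.zero_le _
  | succ n ih =>
    have right : modBinom n q (s + 1) ≤ modBinom n q s := by
      rcases lt_or_eq_of_le (show 2 * s + 2 ≤ n + q + 1 by omega) with h | h
      · exact ih s (by omega) (by omega)
      · rw [← modBinom_sub (s + 1)]
        exact (modBinom_congr (Int.modEq_iff_dvd.mpr ⟨1, by omega⟩)).le
    have left : modBinom n q s ≤ modBinom n q (s - 1) := by
      rcases lt_or_eq_of_le (show (n : ℤ) + 1 ≤ 2 * s by omega) with h | h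
      · simpa using ih (s - 1) (by omega) (by omega)
      · rw [← modBinom_sub (s - 1), show (n : ℤ) - (s - 1) = s by omega]
    rw [modBinom_succ, modBinom_succ, add_sub_cancel_right]
    omega

end ModBinom

/-- The indices of row `n` counted outwards from the middle: `n/2, n/2 - 1, n/2 + 1, …` for even
`n` and `(n-1)/2, (n+1)/2, (n-3)/2, …` for odd `n`; the first `k` of them are the `j` with
`n - k ≤ 2 * j < n + k`. -/
def outwardIndex (n i : ℕ) : ℤ :=
  if (n + i) % 2 = 0 then ((n : ℤ) + i) / 2 else ((n : ℤ) - i - 1) / 2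

lemma two_mul_outwardIndex (n i : ℕ) :
    2 * outwardIndex n i = if (n + i) % 2 = 0 then (n : ℤ) + i else (n : ℤ) - i - 1 := by
  unfold outwardIndex
  split_ifs <;> omega

/-- `∑_{n - k ≤ 2j < n + k} C(n,j)_q`, summed from the middle outwards. -/
def windowSum (q n k : ℕ) : ℕ := ∑ i ∈ range k, modBinom n q (outwardIndex n i)

section WindowSum

variable {q n : ℕ}

lemma windowSum_add_one (k : ℕ) :
    windowSum q n (k + 1) = windowSum q n k + modBinom n q (outwardIndex n k) :=
  sum_range_succ _ k

lemma windowSum_one : windowSum q n 1 = modBinom n q (n / 2 : ℕ) := by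
  have h := two_mul_outwardIndex n 0
  rw [windowSum, sum_range_one, show outwardIndex n 0 = (n / 2 : ℕ) by split_ifs at h <;> omega]

lemma modBinom_outwardIndex_succ_le {i : ℕ} (hi : i + 1 < q) :
    modBinom n q (outwardIndex n (i + 1)) ≤ modBinom n q (outwardIndex n i) := by
  have h₀ := two_mul_outwardIndex n i
  have h₁ := two_mul_outwardIndex n (i + 1)
  split_ifs at h₀ h₁
  all_goals try omega
  · rw [show outwardIndex n (i + 1) = n - (outwardIndex n i + 1) by omega, modBinom_sub]
    exact modBinom_add_one_le _ (by omega) (by omega)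
  · rw [show outwardIndex n (i + 1) = n - outwardIndex n i by omega, modBinom_sub]

lemma antitoneOn_modBinom_outwardIndex :
    AntitoneOn (fun i => modBinom n q (outwardIndex n i)) (Set.Iio q) :=
  antitoneOn_of_add_one_le Set.ordConnected_Iio fun _ _ _ hi => modBinom_outwardIndex_succ_le hi

lemma modBinom_outwardIndex_modulus [NeZero q] :
    modBinom n q (outwardIndex n q) = modBinom n q (outwardIndex n (q - 1)) := by
  have hq := NeZero.pos q
  have h₀ := two_mul_outwardIndex n q
  have h₁ := two_mul_outwardIndex n (q - 1)
  refine modBinom_congr (Int.modEq_iff_dvd.mpr ?_)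
  split_ifs at h₀ h₁
  all_goals try omega
  · exact ⟨-1, by omega⟩
  · exact ⟨1, by omega⟩

lemma modBinom_succ_outwardIndex_zero :
    modBinom (n + 1) q (outwardIndex (n + 1) 0) =
      modBinom n q (outwardIndex n 0) + modBinom n q (outwardIndex n 1) := by
  have h := two_mul_outwardIndex (n + 1) 0
  have h₀ := two_mul_outwardIndex n 0
  have h₁ := two_mul_outwardIndex n 1
  rw [modBinom_succ]
  split_ifs at h h₀ h₁
  all_goals try omega
  · rw [show outwardIndex (n + 1) 0 = outwardIndex n 1 by omega,
      show outwardIndex n 1 - 1 = outwardIndex n 0 by omega, add_comm]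
  · rw [show outwardIndex (n + 1) 0 = outwardIndex n 0 by omega,
      show outwardIndex n 0 - 1 = outwardIndex n 1 by omega]

lemma modBinom_succ_outwardIndex_succ (i : ℕ) :
    modBinom (n + 1) q (outwardIndex (n + 1) (i + 1)) =
      modBinom n q (outwardIndex n (i + 2)) + modBinom n q (outwardIndex n i) := by
  have h := two_mul_outwardIndex (n + 1) (i + 1)
  have h₀ := two_mul_outwardIndex n (i + 2)
  have h₁ := two_mul_outwardIndex n i
  rw [modBinom_succ]
  split_ifs at h h₀ h₁
  all_goals try omega
  · rw [show outwardIndex (n + 1) (i + 1) = outwardIndex n (i + 2) by omega,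
      show outwardIndex n (i + 2) - 1 = outwardIndex n i by omega]
  · rw [show outwardIndex (n + 1) (i + 1) = outwardIndex n i by omega,
      show outwardIndex n i - 1 = outwardIndex n (i + 2) by omega, add_comm]

lemma windowSum_succ_succ (k : ℕ) :
    windowSum q (n + 1) (k + 1) = windowSum q n (k + 2) + windowSum q n k := by
  induction k with
  | zero => simp [windowSum, sum_range_succ, modBinom_succ_outwardIndex_zero]
  | succ k ih =>
    rw [windowSum_add_one, ih, modBinom_succ_outwardIndex_succ, windowSum_add_one (k + 2),
      windowSum_add_one k]
    ring

lemma windowSum_add_le (j : ℕ) {v : ℕ} (h : v + 2 * j + 2 ≤ q) :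
    windowSum q n (v + 2 * j + 2) + windowSum q n v ≤
      windowSum q n (v + j + 2) + windowSum q n (v + j) := by
  induction j generalizing v with
  | zero => rfl
  | succ j ih =>
    have hD : modBinom n q (outwardIndex n (v + 2 * j + 3)) ≤ modBinom n q (outwardIndex n v) :=
      antitoneOn_modBinom_outwardIndex (Set.mem_Iio.mpr (by omega)) (Set.mem_Iio.mpr (by omega))
        (by omega)
    have ih' := ih (v := v + 1) (by omega)
    rw [show v + 1 + 2 * j + 2 = v + 2 * j + 3 by ring, show v + 1 + j + 2 = v + (j + 1) + 2 by ring,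
      show v + 1 + j = v + (j + 1) by ring, windowSum_add_one v] at ih'
    rw [show v + 2 * (j + 1) + 2 = v + 2 * j + 3 + 1 by ring, windowSum_add_one (v + 2 * j + 3)]
    omega

lemma windowSum_add_le_succ {u v k : ℕ} (huv : u + v = 2 * k) (hvk : v < k) (huq : u ≤ q) :
    windowSum q n u + windowSum q n v ≤ windowSum q (n + 1) k := by
  obtain ⟨j, rfl⟩ : ∃ j, k = v + j + 1 := ⟨k - v - 1, by omega⟩
  obtain rfl : u = v + 2 * j + 2 := by omega
  rw [windowSum_succ_succ]
  exact windowSum_add_le j huq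

lemma windowSum_succ_modulus [NeZero q] : windowSum q (n + 1) q = 2 * windowSum q n q := by
  obtain ⟨p, rfl⟩ : ∃ p, q = p + 1 := ⟨q - 1, (Nat.sub_one_add_one (NeZero.ne q)).symm⟩
  have h := modBinom_outwardIndex_modulus (n := n) (q := p + 1)
  rw [Nat.add_sub_cancel] at h
  rw [windowSum_succ_succ, windowSum_add_one, windowSum_add_one, h]
  ring

lemma one_le_windowSum_zero {k : ℕ} (hk : 0 < k) : 1 ≤ windowSum q 0 k := by
  have : modBinom 0 q (outwardIndex 0 0) = 1 := by simp [modBinom, outwardIndex]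
  exact this ▸ single_le_sum (f := fun i => modBinom 0 q (outwardIndex 0 i)) (fun _ _ => Nat.zero_le _)
    (mem_range.mpr hk)

end WindowSum

section SubsetSums

variable {ι G : Type*} [DecidableEq ι] [AddCommGroup G] [DecidableEq G]

def subsetSumCount (a : ι → G) (s : Finset ι) (T : Finset G) : ℕ :=
  #{I ∈ s.powerset | ∑ i ∈ I, a i ∈ T}

variable (a : ι → G) (s : Finset ι)

lemma subsetSumCount_insert {x : ι} (hx : x ∉ s) (T : Finset G) :
    subsetSumCount a (insert x s) T =
      subsetSumCount a s T + subsetSumCount a s (T.map (Equiv.subRight (a x)).toEmbedding) := by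
  simp only [subsetSumCount, card_filter, sum_powerset_insert hx, mem_map_equiv,
    Equiv.subRight_symm_apply]
  congr 1
  refine sum_congr rfl fun I hI => ?_
  rw [sum_insert fun h => hx (mem_powerset.mp hI h), add_comm]

lemma subsetSumCount_union_add_inter (T U : Finset G) :
    subsetSumCount a s (T ∪ U) + subsetSumCount a s (T ∩ U) =
      subsetSumCount a s T + subsetSumCount a s U := by
  simp only [subsetSumCount, mem_union, mem_inter, filter_or, filter_and]
  exact card_union_add_card_inter _ _

end SubsetSums

lemma eq_univ_of_map_subRight_eq {q : ℕ} [NeZero q] {a : ZMod q} (ha : IsUnit a)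
    {T : Finset (ZMod q)} (hT : T.map (Equiv.subRight a).toEmbedding = T) (hne : T.Nonempty) :
    T = univ := by
  obtain ⟨t, ht⟩ := hne
  have hsub : ∀ m : ℕ, t - m * a ∈ T := by
    intro m
    induction m with
    | zero => simpa using ht
    | succ m ih =>
      rw [← hT, mem_map_equiv, Equiv.subRight_symm_apply]
      convert ih using 1
      push_cast
      ring
  refine eq_univ_of_forall fun b => ?_
  have hb := hsub ((t - b) * a⁻¹).val
  rwa [ZMod.natCast_zmod_val, mul_assoc, ZMod.inv_mul_of_unit a ha, mul_one, sub_sub_cancel] at hb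

theorem subsetSumCount_le_windowSum {q : ℕ} [NeZero q] {ι : Type*} [DecidableEq ι]
    (a : ι → ZMod q) (s : Finset ι) (ha : ∀ i ∈ s, IsUnit (a i)) (T : Finset (ZMod q)) :
    subsetSumCount a s T ≤ windowSum q #s #T := by
  induction s using Finset.induction_on generalizing T with
  | empty =>
    rcases T.eq_empty_or_nonempty with rfl | hne
    · simp [subsetSumCount]
    calc subsetSumCount a ∅ T ≤ #(∅ : Finset ι).powerset := card_filter_le _ _
      _ = 1 := by simp
      _ ≤ windowSum q 0 #T := one_le_windowSum_zero hne.card_pos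
  | @insert x s hx ih =>
    have has : ∀ i ∈ s, IsUnit (a i) := fun i hi => ha i (mem_insert_of_mem hi)
    rw [subsetSumCount_insert a s hx, card_insert_of_notMem hx]
    set T' := T.map (Equiv.subRight (a x)).toEmbedding
    by_cases hT : T' = T
    · rcases T.eq_empty_or_nonempty with rfl | hne
      · simp [subsetSumCount, hT]
      have huniv := eq_univ_of_map_subRight_eq (ha x (mem_insert_self x s)) hT hne
      have hq : #T = q := by rw [huniv, card_univ, ZMod.card]
      have hle := ih has T
      rw [hq] at hle
      rw [hT, hq, windowSum_succ_modulus, two_mul]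
      exact add_le_add hle hle
    · have hcard : #T' = #T := card_map _
      have hinter : #(T ∩ T') < #T := by
        refine card_lt_card (Finset.ssubset_iff_subset_ne.mpr ⟨inter_subset_left, fun h => hT ?_⟩)
        exact (eq_of_subset_of_card_le (inter_eq_left.mp h) hcard.le).symm
      rw [← subsetSumCount_union_add_inter]
      refine (add_le_add (ih has _) (ih has _)).trans (windowSum_add_le_succ ?_ hinter ?_)
      · rw [card_union_add_card_inter, hcard, two_mul]
      · exact (card_le_univ _).trans (ZMod.card q).le

theorem griggs_zero_sum (q n : ℕ) [NeZero q] (a : Fin n → ZMod q)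
    (ha : ∀ i, IsUnit (a i)) :
    ((Finset.univ : Finset (Finset (Fin n))).filter
        (fun I => (∑ i ∈ I, a i) = 0)).card ≤ modBinom n q (n / 2 : ℕ) := by
  have h := subsetSumCount_le_windowSum a univ (fun i _ => ha i) {0}
  simpa only [card_univ, Fintype.card_fin, card_singleton, windowSum_one, subsetSumCount,
    powerset_univ, mem_singleton] using h
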